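/- arXiv:2510.06615 — 10 statements merged into one kernel-verified Lean document; each statement's English description precedes it below -/
import Mathlib

section
/- Let x ∈ C, λ > 0, and let y ∈ C be the minimizer over cl C of u ↦ ⟨∇f(x), u − x⟩ + g(u) + (1/(2λ))⟨∇²φ(x)(u − x), u − x⟩. Set d = y − x and assume d ≠ 0. Then for every ξ in the convex subdifferential ∂g(x): ⟨∇f(x) + ξ, d⟩ ≤ ⟨∇f(x), d⟩ + g(x + d) − g(x) ≤ −(1/λ)⟨∇²φ(x)d, d⟩ < 0. -/
/-!
Comparing the minimiser `y` with the points `x + t d`, `0 < t < 1`, of the segment and using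
convexity of `g` gives `(1 - t) (⟪∇f(x), d⟫ + g y - g x) ≤ (t² - 1)/(2λ) ⟪∇²φ(x) d, d⟫`;
dividing by `1 - t` and letting `t → 1` yields the middle inequality. The first inequality is
the subgradient inequality at `x + d`, the last one is strong convexity of `φ` at `x`.
-/

open Set Filter Topology
open scoped RealInnerProductSpace

/-- The convex subdifferential of `g + δ_S` at `x`: vectors `ξ` satisfying the
subgradient inequality against all points of `S`. With `S = Set.univ` this is the
usual convex subdifferential `∂g(x)`. -/
def subdiffWithin {E : Type*} [NormedAddCommGroup E] [InnerProductSpace ℝ E]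
    (g : E → ℝ) (S : Set E) (x : E) : Set E :=
  {ξ | ∀ y ∈ S, g x + ⟪ξ, y - x⟫ ≤ g y}

theorem le_neg_two_mul_of_forall_mem_Ioo {a c : ℝ}
    (h : ∀ t ∈ Ioo (0 : ℝ) 1, a ≤ -((1 + t) * c)) : a ≤ -(2 * c) := by
  have htend : Tendsto (fun t : ℝ => -((1 + t) * c)) (𝓝[<] 1) (𝓝 (-((1 + 1) * c))) :=
    ((by fun_prop : Continuous fun t : ℝ => -((1 + t) * c)).tendsto 1).mono_left
      nhdsWithin_le_nhds
  rw [one_add_one_eq_two] at htend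
  exact ge_of_tendsto htend (mem_of_superset (Ioo_mem_nhdsLT zero_lt_one) h)

theorem IsMinOn.inner_add_sub_le_neg_inner {E : Type*} [NormedAddCommGroup E]
    [InnerProductSpace ℝ E] {S : Set E} {g : E → ℝ} (hg : ConvexOn ℝ S g)
    {a x y : E} {A : E →L[ℝ] E} {lam : ℝ} (hlam : 0 < lam) (hx : x ∈ S) (hy : y ∈ S)
    (hmin : IsMinOn (fun u => ⟪a, u - x⟫ + g u + (1 / (2 * lam)) * ⟪A (u - x), u - x⟫) S y) :
    ⟪a, y - x⟫ + g y - g x ≤ -(1 / lam) * ⟪A (y - x), y - x⟫ := by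
  set d := y - x
  set Q := ⟪A d, d⟫
  have hsegment : ∀ t ∈ Ioo (0 : ℝ) 1, ⟪a, d⟫ + g y - g x ≤ -((1 + t) * (Q / (2 * lam))) := by
    rintro t ⟨ht0, ht1⟩
    have hpoint : (1 - t) • x + t • y = x + t • d := by module
    have hsum : 1 - t + t = 1 := sub_add_cancel 1 t
    have ht0' : 0 ≤ 1 - t := by linarith
    have hmin_t := isMinOn_iff.mp hmin _ (hg.1 hx hy ht0' ht0.le hsum)
    have hg_t := hg.2 hx hy ht0' ht0.le hsum
    rw [hpoint] at hmin_t hg_t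
    simp only [add_sub_cancel_left, map_smul, real_inner_smul_left, real_inner_smul_right,
      smul_eq_mul] at hmin_t hg_t
    have hscaled : (1 - t) * (⟪a, d⟫ + g y - g x) ≤ (1 - t) * -((1 + t) * (Q / (2 * lam))) := by
      linear_combination hmin_t + hg_t
    exact le_of_mul_le_mul_left hscaled (by linarith)
  calc ⟪a, d⟫ + g y - g x ≤ -(2 * (Q / (2 * lam))) := le_neg_two_mul_of_forall_mem_Ioo hsegment
    _ = -(1 / lam) * Q := by field_simp

theorem stmt0_general
    {E : Type*} [NormedAddCommGroup E] [InnerProductSpace ℝ E]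
    (C : Set E) (hCconv : Convex ℝ C)
    (g : E → ℝ) (f' : E → E) (Hφ : E → E →L[ℝ] E) (σ : ℝ) (hσ : 0 < σ)
    (hφstrong : ∀ z ∈ C, ∀ u : E, σ * ‖u‖ ^ 2 ≤ ⟪Hφ z u, u⟫)
    (hgconv : ConvexOn ℝ Set.univ g)
    (x : E) (hx : x ∈ C) (lam : ℝ) (hlam : 0 < lam)
    (y : E) (hy : y ∈ C)
    (hymin : IsMinOn (fun u => ⟪f' x, u - x⟫ + g u +
      (1 / (2 * lam)) * ⟪Hφ x (u - x), u - x⟫) (closure C) y)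
    (d : E) (hd : d = y - x) (hdne : d ≠ 0)
    (ξ : E) (hξ : ξ ∈ subdiffWithin g Set.univ x) :
    ⟪f' x + ξ, d⟫ ≤ ⟪f' x, d⟫ + g (x + d) - g x ∧
    ⟪f' x, d⟫ + g (x + d) - g x ≤ -(1 / lam) * ⟪Hφ x d, d⟫ ∧
    -(1 / lam) * ⟪Hφ x d, d⟫ < 0 := by
  have hxd : x + d = y := by rw [hd, add_sub_cancel]
  have hQ : 0 < ⟪Hφ x d, d⟫ :=
    (mul_pos hσ (pow_pos (norm_pos_iff.mpr hdne) 2)).trans_le (hφstrong x hx d)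
  refine ⟨?_, ?_, ?_⟩
  · have hsub := hξ (x + d) (mem_univ _)
    rw [add_sub_cancel_left] at hsub
    rw [inner_add_left]
    linarith
  · rw [hxd, hd]
    exact hymin.inner_add_sub_le_neg_inner (hgconv.subset (subset_univ _) hCconv.closure)
      hlam (subset_closure hx) (subset_closure hy)
  · have : 0 < 1 / lam * ⟪Hφ x d, d⟫ := mul_pos (one_div_pos.mpr hlam) hQ
    linarith

/-- search direction property. -/
theorem stmt0
    {E : Type*} [NormedAddCommGroup E] [InnerProductSpace ℝ E] [FiniteDimensional ℝ E]
    (C : Set E) (hCne : C.Nonempty) (hCopen : IsOpen C) (hCconv : Convex ℝ C)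
    (φ f g : E → ℝ) (φ' f' : E → E) (Hφ : E → E →L[ℝ] E) (σ : ℝ) (hσ : 0 < σ)
    (hφconv : ConvexOn ℝ Set.univ φ) (hφlsc : LowerSemicontinuous φ)
    (hφ'grad : ∀ z ∈ C, HasGradientAt φ (φ' z) z)
    (hφ'' : ∀ z ∈ C, HasFDerivAt φ' (Hφ z) z)
    (hφ''cont : ContinuousOn Hφ C)
    (hφstrong : ∀ z ∈ C, ∀ u : E, σ * ‖u‖ ^ 2 ≤ ⟪Hφ z u, u⟫)
    (hf'grad : ∀ z ∈ C, HasGradientAt f (f' z) z)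
    (hf'cont : ContinuousOn f' C)
    (hgconv : ConvexOn ℝ Set.univ g) (hglsc : LowerSemicontinuous g)
    (x : E) (hx : x ∈ C) (lam : ℝ) (hlam : 0 < lam)
    (y : E) (hy : y ∈ C)
    (hymin : IsMinOn (fun u => ⟪f' x, u - x⟫ + g u +
      (1 / (2 * lam)) * ⟪Hφ x (u - x), u - x⟫) (closure C) y)
    (d : E) (hd : d = y - x) (hdne : d ≠ 0)
    (ξ : E) (hξ : ξ ∈ subdiffWithin g Set.univ x) :
    ⟪f' x + ξ, d⟫ ≤ ⟪f' x, d⟫ + g (x + d) - g x ∧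
    ⟪f' x, d⟫ + g (x + d) - g x ≤ -(1 / lam) * ⟪Hφ x d, d⟫ ∧
    -(1 / lam) * ⟪Hφ x d, d⟫ < 0 :=
  stmt0_general C hCconv g f' Hφ σ hσ hφstrong hgconv x hx lam hlam y hy hymin d hd hdne ξ hξ
end

section
/- Let x ∈ C, λ > 0, c₁ ∈ (0,1), let y ∈ C be the minimizer over cl C of u ↦ ⟨∇f(x), u − x⟩ + g(u) + (1/(2λ))⟨∇²φ(x)(u − x), u − x⟩, and set d = y − x. Suppose t > 0 satisfies the Armijo-type condition: x + t d ∈ cl C and Ψ(x + t d) < Ψ(x) + c₁ t (⟨∇f(x), d⟩ + g(x + d) − g(x) + (1/(2λ))⟨∇²φ(x)d, d⟩). Define x⁺ = y if Ψ(y) < Ψ(x + t d) and x⁺ = x + t d otherwise. Then Ψ(x⁺) − Ψ(x) ≤ −(c₁ t/(2λ))⟨∇²φ(x)d, d⟩ ≤ 0. -/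
open Set Filter Topology
open scoped RealInnerProductSpace

/-- sufficient decrease property. -/
theorem stmt1
    {E : Type*} [NormedAddCommGroup E] [InnerProductSpace ℝ E] [FiniteDimensional ℝ E]
    (C : Set E) (hCne : C.Nonempty) (hCopen : IsOpen C) (hCconv : Convex ℝ C)
    (φ f g : E → ℝ) (φ' f' : E → E) (Hφ : E → E →L[ℝ] E) (σ : ℝ) (hσ : 0 < σ)
    (hφconv : ConvexOn ℝ Set.univ φ) (hφlsc : LowerSemicontinuous φ)
    (hφ'grad : ∀ z ∈ C, HasGradientAt φ (φ' z) z)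
    (hφ'' : ∀ z ∈ C, HasFDerivAt φ' (Hφ z) z)
    (hφ''cont : ContinuousOn Hφ C)
    (hφstrong : ∀ z ∈ C, ∀ u : E, σ * ‖u‖ ^ 2 ≤ ⟪Hφ z u, u⟫)
    (hf'grad : ∀ z ∈ C, HasGradientAt f (f' z) z)
    (hf'cont : ContinuousOn f' C)
    (hgconv : ConvexOn ℝ Set.univ g) (hglsc : LowerSemicontinuous g)
    (Ψ : E → ℝ) (hΨ : ∀ z, Ψ z = f z + g z)
    (x : E) (hx : x ∈ C) (lam : ℝ) (hlam : 0 < lam)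
    (c₁ : ℝ) (hc₁ : c₁ ∈ Ioo (0 : ℝ) 1)
    (y : E) (hy : y ∈ C)
    (hymin : IsMinOn (fun u => ⟪f' x, u - x⟫ + g u +
      (1 / (2 * lam)) * ⟪Hφ x (u - x), u - x⟫) (closure C) y)
    (d : E) (hd : d = y - x)
    (t : ℝ) (ht : 0 < t) (htC : x + t • d ∈ closure C)
    (hArmijo : Ψ (x + t • d) < Ψ x + c₁ * t *
      (⟪f' x, d⟫ + g (x + d) - g x + (1 / (2 * lam)) * ⟪Hφ x d, d⟫)) :
    Ψ (if Ψ y < Ψ (x + t • d) then y else x + t • d) - Ψ x ≤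
      -(c₁ * t / (2 * lam)) * ⟪Hφ x d, d⟫ ∧
    -(c₁ * t / (2 * lam)) * ⟪Hφ x d, d⟫ ≤ 0 := by
  have hxcl : x ∈ closure C := subset_closure hx
  have hycl : y ∈ closure C := subset_closure hy
  have hxd : x + d = y := by rw [hd]; abel
  have hyx : y - x = d := by rw [hd]
  set Q : ℝ := ⟪Hφ x d, d⟫ with hQdef
  have hQ0 : 0 ≤ Q := le_trans (by positivity) (hφstrong x hx d)
  set c : ℝ := 1 / (2 * lam) with hc
  have hcpos : 0 < c := by positivity
  have hcQ0 : 0 ≤ c * Q := mul_nonneg hcpos.le hQ0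
  -- Step 1: for each θ ∈ (0,1], compare the model value at y with the convex combination
  have hstep : ∀ θ : ℝ, θ ∈ Ioc (0:ℝ) 1 →
      ⟪f' x, d⟫ + g y - g x ≤ (θ - 2) * (c * Q) := by
    intro θ hθ
    have hu : x + (1 - θ) • d = θ • x + (1 - θ) • y := by
      rw [hd]; module
    have hmem : x + (1 - θ) • d ∈ closure C := by
      rw [hu]
      exact hCconv.closure hxcl hycl hθ.1.le (by linarith [hθ.2]) (by ring)
    have hFy := isMinOn_iff.mp hymin _ hmem
    have hsub : x + (1 - θ) • d - x = (1 - θ) • d := by abel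
    rw [hyx, hsub] at hFy
    have hsm : (Hφ x) ((1 - θ) • d) = (1 - θ) • (Hφ x d) := (Hφ x).map_smul _ _
    rw [hsm, real_inner_smul_left, real_inner_smul_right, real_inner_smul_right] at hFy
    have hg : g (θ • x + (1 - θ) • y) ≤ θ * g x + (1 - θ) * g y :=
      hgconv.2 (mem_univ x) (mem_univ y) hθ.1.le (by linarith [hθ.2]) (by ring)
    rw [hu] at hFy
    -- hFy : ⟪f'x,d⟫ + g y + c*Q ≤ (1-θ)*⟪f'x,d⟫ + g(..) + (1-θ)*((1-θ)*(c*Q))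
    have hθL : θ * (⟪f' x, d⟫ + g y - g x) ≤ θ * ((θ - 2) * (c * Q)) := by
      nlinarith [hFy, hg]
    exact le_of_mul_le_mul_left hθL hθ.1
  -- Step 2: let θ → 0
  have hkey : ⟪f' x, d⟫ + g y - g x ≤ -(2 * (c * Q)) := by
    refine le_of_forall_pos_le_add fun ε hε => ?_
    set θ := min 1 (ε / (c * Q + 1)) with hθdef
    have hθpos : 0 < θ := lt_min one_pos (by positivity)
    have h1 := hstep θ ⟨hθpos, min_le_left _ _⟩
    have hθle : θ ≤ ε / (c * Q + 1) := min_le_right _ _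
    have hcq1 : (0:ℝ) < c * Q + 1 := by linarith
    have h2 : θ * (c * Q) ≤ ε := by
      calc θ * (c * Q) ≤ (ε / (c * Q + 1)) * (c * Q) := by nlinarith
        _ ≤ ε := by
            rw [div_mul_eq_mul_div, div_le_iff₀ hcq1]; nlinarith
    nlinarith
  -- Step 3: conclude
  have hΔ : ⟪f' x, d⟫ + g (x + d) - g x + c * Q ≤ -(c * Q) := by
    rw [hxd]; linarith
  have hc1t : 0 < c₁ * t := mul_pos hc₁.1 ht
  have heq : -(c₁ * t / (2 * lam)) * Q = c₁ * t * (-(c * Q)) := by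
    rw [hc]; field_simp
  have h3 : c₁ * t * (⟪f' x, d⟫ + g (x + d) - g x + c * Q) ≤ c₁ * t * (-(c * Q)) :=
    mul_le_mul_of_nonneg_left hΔ hc1t.le
  have hmain : Ψ (x + t • d) - Ψ x ≤ -(c₁ * t / (2 * lam)) * Q := by
    rw [heq]
    linarith
  constructor
  · split_ifs with h
    · linarith
    · exact hmain
  · rw [heq]; nlinarith
end

section
/- Let x ∈ C, λ > 0, let y ∈ C be the minimizer over cl C of u ↦ ⟨∇f(x), u − x⟩ + g(u) + (1/(2λ))⟨∇²φ(x)(u − x), u − x⟩, and set d = y − x. Then for every ξ ∈ ∂g(x): ⟨−∇f(x) − ξ, d⟩ ≥ (1/λ)⟨∇²φ(x)d, d⟩ ≥ (σ/λ)‖d‖². -/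
open Set Filter Topology
open scoped RealInnerProductSpace

/-- bound on the directional derivative along the search direction. -/
theorem stmt2
    {E : Type*} [NormedAddCommGroup E] [InnerProductSpace ℝ E] [FiniteDimensional ℝ E]
    (C : Set E) (hCne : C.Nonempty) (hCopen : IsOpen C) (hCconv : Convex ℝ C)
    (φ f g : E → ℝ) (φ' f' : E → E) (Hφ : E → E →L[ℝ] E) (σ : ℝ) (hσ : 0 < σ)
    (hφconv : ConvexOn ℝ Set.univ φ) (hφlsc : LowerSemicontinuous φ)
    (hφ'grad : ∀ z ∈ C, HasGradientAt φ (φ' z) z)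
    (hφ'' : ∀ z ∈ C, HasFDerivAt φ' (Hφ z) z)
    (hφ''cont : ContinuousOn Hφ C)
    (hφstrong : ∀ z ∈ C, ∀ u : E, σ * ‖u‖ ^ 2 ≤ ⟪Hφ z u, u⟫)
    (hf'grad : ∀ z ∈ C, HasGradientAt f (f' z) z)
    (hf'cont : ContinuousOn f' C)
    (hgconv : ConvexOn ℝ Set.univ g) (hglsc : LowerSemicontinuous g)
    (x : E) (hx : x ∈ C) (lam : ℝ) (hlam : 0 < lam)
    (y : E) (hy : y ∈ C)
    (hymin : IsMinOn (fun u => ⟪f' x, u - x⟫ + g u +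
      (1 / (2 * lam)) * ⟪Hφ x (u - x), u - x⟫) (closure C) y)
    (d : E) (hd : d = y - x)
    (ξ : E) (hξ : ξ ∈ subdiffWithin g Set.univ x) :
    (1 / lam) * ⟪Hφ x d, d⟫ ≤ ⟪-f' x - ξ, d⟫ ∧
    (σ / lam) * ‖d‖ ^ 2 ≤ (1 / lam) * ⟪Hφ x d, d⟫ := by
  set A := ⟪f' x, d⟫ with hA
  set Q := ⟪Hφ x d, d⟫ with hQ
  have hQnn : 0 ≤ Q := le_trans (mul_nonneg hσ.le (sq_nonneg _)) (hφstrong x hx d)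
  -- key inequality for s ∈ [0,1)
  have key : ∀ s : ℝ, 0 ≤ s → s < 1 →
      A + (g y - g x) + (1 + s) / (2 * lam) * Q ≤ 0 := by
    intro s hs0 hs1
    have hmem : x + s • d ∈ closure C := by
      apply subset_closure
      have := hCconv hx hy (by linarith : (0:ℝ) ≤ 1 - s) hs0 (by ring)
      convert this using 1
      rw [hd]; module
    have hmin := isMinOn_iff.mp hymin _ hmem
    have hgc := hgconv.2 (mem_univ x) (mem_univ y) (by linarith : (0:ℝ) ≤ 1 - s) hs0
      (by ring : (1 - s) + s = 1)
    have heq : (1 - s) • x + s • y = x + s • d := by rw [hd]; module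
    rw [heq] at hgc
    simp only [smul_eq_mul] at hgc
    have hyx : y - x = d := hd.symm
    have harg : x + s • d - x = s • d := by abel
    rw [← hd, harg] at hmin
    simp only [map_smul, real_inner_smul_left, real_inner_smul_right] at hmin
    -- hmin : A + g y + 1/(2 lam) * Q ≤ s * A + g (x + s•d) + 1/(2 lam) * (s * (s * Q))
    have hlamne : (2:ℝ) * lam ≠ 0 := by positivity
    have hq : (1 - s^2) / (2*lam) * Q = 1/(2*lam) * Q - 1/(2*lam) * (s * (s * Q)) := by
      field_simp
    have h1 : (1 - s) * (A + (g y - g x)) + (1 - s^2) / (2*lam) * Q ≤ 0 := by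
      simp only [hA, hQ] at hmin hq ⊢
      rw [hq]
      linarith [hmin, hgc]
    have h2 : (1 - s) * (A + (g y - g x) + (1 + s) / (2*lam) * Q) ≤ 0 := by
      have : (1 - s) * ((1 + s) / (2*lam) * Q) = (1 - s^2) / (2*lam) * Q := by ring
      nlinarith [h1, this]
    nlinarith [h2, sub_pos.mpr hs1]
  -- pass to the limit s → 1
  have hlim : A + (g y - g x) + (1 / lam) * Q ≤ 0 := by
    have htend : Tendsto (fun n : ℕ =>
        A + (g y - g x) + (1 + (1 - 1 / (n + 1))) / (2 * lam) * Q) atTop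
        (𝓝 (A + (g y - g x) + (1 + (1 - 0)) / (2 * lam) * Q)) := by
      apply Tendsto.add tendsto_const_nhds
      apply Tendsto.mul_const
      apply Tendsto.div_const
      exact tendsto_const_nhds.add
        (tendsto_const_nhds.sub tendsto_one_div_add_atTop_nhds_zero_nat)
    have heq : A + (g y - g x) + (1 + (1 - 0)) / (2 * lam) * Q
        = A + (g y - g x) + (1 / lam) * Q := by
      field_simp; ring
    rw [heq] at htend
    refine le_of_tendsto' htend fun n => ?_
    have hpos : (0:ℝ) < 1 / (n + 1) := by positivity
    have hle : 1 / ((n:ℝ) + 1) ≤ 1 := by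
      rw [div_le_one (by positivity)]; linarith
    exact key _ (by linarith) (by linarith)
  have hxi : ⟪ξ, d⟫ ≤ g y - g x := by
    have := hξ y (mem_univ y)
    rw [← hd] at this; linarith
  constructor
  · have hsplit : ⟪-f' x - ξ, d⟫ = -A - ⟪ξ, d⟫ := by
      rw [hA, show -f' x - ξ = -(f' x + ξ) by abel, inner_neg_left, inner_add_left]
      ring
    rw [hsplit]; linarith
  · have hs := hφstrong x hx d
    have hl : (0:ℝ) ≤ 1 / lam := by positivity
    have hmul := mul_le_mul_of_nonneg_left hs hl
    calc (σ / lam) * ‖d‖ ^ 2 = (1 / lam) * (σ * ‖d‖ ^ 2) := by ring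
      _ ≤ (1 / lam) * Q := by rw [hQ]; exact hmul
end

section
/- Let {x^k}, {y^k}, {d^k} ⊂ C and {t_k} ⊂ (0, t̄] (with t̄ < ∞) be sequences generated by the ABPG-VMAW recurrences with parameters 0 < c₁ < c₂ < 1 and λ > 0, and suppose Ψ* := inf_{x ∈ cl C} Ψ(x) > −∞. Then ∑_{k=0}^{∞} ‖t_k d^k‖² ≤ (2λ t̄/(c₁ σ)) (Ψ(x⁰) − Ψ*) < ∞; in particular ‖t_k d^k‖ → 0 as k → ∞. -/
open Set Filter Topology
open scoped RealInnerProductSpace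

/-!
The subproblem objective `u ↦ ⟪a, u - x⟫ + g u + c ⟪H (u - x), u - x⟫` is minimised over a convex
set by `y`; comparing `y` with the points of the segment `[x, y]` shows that its value at `y`
lies below `g x` by at least `c ⟪H (y - x), y - x⟫ ≥ c σ ‖y - x‖²`. With `c = 1/(2λ)`, the Armijo
condition and the update rule then give `Ψ(x^{k+1}) ≤ Ψ(x^k) - (c₁σ/(2λ)) t_k ‖d^k‖²`, and
`t_k ≤ t̄` turns this into `‖t_k d^k‖² ≤ (2λt̄/(c₁σ)) (Ψ(x^k) - Ψ(x^{k+1}))`, which telescopes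
against the lower bound `Ψ*`.
-/

section Model

variable {E : Type*} [NormedAddCommGroup E] [InnerProductSpace ℝ E]

/-- The ABPG subproblem objective at `x`, with `a = ∇f(x)`, `H = ∇²φ(x)` and `c = 1/(2λ)`. -/
def proxModel (a : E) (g : E → ℝ) (H : E →L[ℝ] E) (c : ℝ) (x u : E) : ℝ :=
  ⟪a, u - x⟫ + g u + c * ⟪H (u - x), u - x⟫

theorem proxModel_sub_le_of_isMinOn {S : Set E} {g : E → ℝ} {a x y : E} {H : E →L[ℝ] E}
    {c : ℝ} (hS : Convex ℝ S) (hg : ConvexOn ℝ S g) (hx : x ∈ S) (hy : y ∈ S)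
    (hmin : IsMinOn (proxModel a g H c x) S y) :
    proxModel a g H c x y - g x ≤ -(c * ⟪H (y - x), y - x⟫) := by
  set L := ⟪a, y - x⟫ + g y - g x
  set Q := c * ⟪H (y - x), y - x⟫
  -- minimality of `y` against `(1 - s) • x + s • y` gives `L ≤ -(1 + s) * Q`; then let `s → 1`
  have hseg : ∀ s ∈ Ioo (0 : ℝ) 1, L ≤ -(1 + s) * Q := by
    rintro s ⟨hs0, hs1⟩
    have hz : (1 - s) • x + s • y ∈ S := hS hx hy (by linarith) hs0.le (by ring)
    have hzx : (1 - s) • x + s • y - x = s • (y - x) := by module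
    have hgz : g ((1 - s) • x + s • y) ≤ (1 - s) * g x + s * g y :=
      hg.2 hx hy (by linarith) hs0.le (by ring)
    have hle : proxModel a g H c x y ≤ proxModel a g H c x ((1 - s) • x + s • y) :=
      isMinOn_iff.mp hmin _ hz
    simp only [proxModel, hzx, map_smul, real_inner_smul_left, real_inner_smul_right] at hle
    have hscaled : (1 - s) * L ≤ (1 - s) * (-(1 + s) * Q) := by
      simp only [L, Q]; nlinarith
    exact le_of_mul_le_mul_left hscaled (by linarith)
  have hlim : Tendsto (fun s : ℝ => -(1 + s) * Q) (𝓝[<] 1) (𝓝 (-(1 + 1) * Q)) :=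
    ((continuous_const.add continuous_id).neg.mul continuous_const).continuousWithinAt
  have hL := ge_of_tendsto hlim (eventually_of_mem (Ioo_mem_nhdsLT one_pos) hseg)
  simp only [proxModel, L, Q] at hL ⊢
  linarith

end Model

theorem summable_and_tsum_le_of_le_mul_sub_succ {a u : ℕ → ℝ} {K m : ℝ} (hK : 0 ≤ K)
    (ha : ∀ k, 0 ≤ a k) (hau : ∀ k, a k ≤ K * (u k - u (k + 1))) (hm : ∀ k, m ≤ u k) :
    Summable a ∧ ∑' k, a k ≤ K * (u 0 - m) := by
  have hpartial : ∀ N, ∑ k ∈ Finset.range N, a k ≤ K * (u 0 - m) := fun N =>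
    calc ∑ k ∈ Finset.range N, a k
        ≤ ∑ k ∈ Finset.range N, K * (u k - u (k + 1)) := Finset.sum_le_sum fun k _ => hau k
      _ = K * (u 0 - u N) := by rw [← Finset.mul_sum, Finset.sum_range_sub']
      _ ≤ K * (u 0 - m) := by gcongr; exact hm N
  have hsum := summable_of_sum_range_le ha hpartial
  exact ⟨hsum, hsum.tsum_le_of_sum_range_le hpartial⟩

theorem sq_norm_smul_le_of_le_sub {E : Type*} [NormedAddCommGroup E] [NormedSpace ℝ E]
    {v : E} {t tbar c μ a b : ℝ} (ht : 0 ≤ t) (htbar : t ≤ tbar) (hcμ : 0 < c * μ)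
    (hab : b ≤ a - c * t * μ * ‖v‖ ^ 2) :
    ‖t • v‖ ^ 2 ≤ tbar / (c * μ) * (a - b) := by
  have hdec : c * μ * (t * ‖v‖ ^ 2) ≤ a - b := by linarith
  calc ‖t • v‖ ^ 2 = t * (t * ‖v‖ ^ 2) := by rw [norm_smul, Real.norm_of_nonneg ht]; ring
    _ ≤ tbar * (t * ‖v‖ ^ 2) := by gcongr
    _ = tbar / (c * μ) * (c * μ * (t * ‖v‖ ^ 2)) := by
      rw [← mul_assoc (tbar / _), div_mul_cancel₀ _ hcμ.ne']
    _ ≤ tbar / (c * μ) * (a - b) := by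
      gcongr
      exact div_nonneg (ht.trans htbar) hcμ.le

theorem stmt3_general
    {E : Type*} [NormedAddCommGroup E] [InnerProductSpace ℝ E]
    (C : Set E) (hCconv : Convex ℝ C)
    (g : E → ℝ) (f' : E → E) (Hφ : E → E →L[ℝ] E) (σ : ℝ) (hσ : 0 < σ)
    (hφstrong : ∀ z ∈ C, ∀ u : E, σ * ‖u‖ ^ 2 ≤ ⟪Hφ z u, u⟫)
    (hgconv : ConvexOn ℝ Set.univ g)
    (Ψ : E → ℝ)
    (c₁ lam : ℝ) (hc₁ : 0 < c₁) (hlam : 0 < lam)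
    (x y d : ℕ → E) (t : ℕ → ℝ) (tbar : ℝ)
    (hxC : ∀ k, x k ∈ C) (hyC : ∀ k, y k ∈ C)
    (ht : ∀ k, 0 < t k) (htbar : ∀ k, t k ≤ tbar)
    (hymin : ∀ k, IsMinOn (fun u => ⟪f' (x k), u - x k⟫ + g u +
      (1 / (2 * lam)) * ⟪Hφ (x k) (u - x k), u - x k⟫) (closure C) (y k))
    (hd : ∀ k, d k = y k - x k)
    (hArmijo : ∀ k, Ψ (x k + t k • d k) < Ψ (x k) + c₁ * t k *
      (⟪f' (x k), d k⟫ + g (y k) - g (x k) +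
        (1 / (2 * lam)) * ⟪Hφ (x k) (d k), d k⟫))
    (hupdate : ∀ k, x (k + 1) =
      if Ψ (y k) < Ψ (x k + t k • d k) then y k else x k + t k • d k)
    (hbdd : BddBelow (Ψ '' closure C)) :
    Summable (fun k => ‖t k • d k‖ ^ 2) ∧
    (∑' k, ‖t k • d k‖ ^ 2) ≤
      (2 * lam * tbar / (c₁ * σ)) * (Ψ (x 0) - sInf (Ψ '' closure C)) ∧
    Tendsto (fun k => ‖t k • d k‖) atTop (𝓝 0) := by
  have hmodel (k : ℕ) : ⟪f' (x k), d k⟫ + g (y k) - g (x k) +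
      (1 / (2 * lam)) * ⟪Hφ (x k) (d k), d k⟫ ≤ -(σ / (2 * lam)) * ‖d k‖ ^ 2 := by
    have hdec := proxModel_sub_le_of_isMinOn hCconv.closure
      (hgconv.subset (subset_univ _) hCconv.closure) (subset_closure (hxC k))
      (subset_closure (hyC k)) (hymin k)
    have hstrong := mul_le_mul_of_nonneg_left (hφstrong (x k) (hxC k) (d k))
      (by positivity : (0 : ℝ) ≤ 1 / (2 * lam))
    simp only [proxModel, ← hd] at hdec
    linarith [show σ / (2 * lam) * ‖d k‖ ^ 2 = 1 / (2 * lam) * (σ * ‖d k‖ ^ 2) by ring]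
  have hdescent (k : ℕ) :
      Ψ (x (k + 1)) ≤ Ψ (x k) - c₁ * t k * (σ / (2 * lam)) * ‖d k‖ ^ 2 := by
    have hnext : Ψ (x (k + 1)) ≤ Ψ (x k + t k • d k) := by
      rw [hupdate k]; split_ifs with h
      exacts [h.le, le_rfl]
    linarith [hArmijo k, mul_le_mul_of_nonneg_left (hmodel k) (mul_pos hc₁ (ht k)).le]
  have hK : 2 * lam * tbar / (c₁ * σ) = tbar / (c₁ * (σ / (2 * lam))) := by field_simp
  obtain ⟨hsum, htsum⟩ := summable_and_tsum_le_of_le_mul_sub_succ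
    (by have := (ht 0).le.trans (htbar 0); positivity) (fun k => sq_nonneg _)
    (fun k => hK ▸ sq_norm_smul_le_of_le_sub (ht k).le (htbar k) (by positivity) (hdescent k))
    (fun k => csInf_le hbdd (mem_image_of_mem Ψ (subset_closure (hxC k))))
  refine ⟨hsum, htsum, ?_⟩
  simpa [Real.sqrt_sq (norm_nonneg _)] using hsum.tendsto_atTop_zero.sqrt

/-- `∑ ‖t_k d^k‖² < ∞` and `‖t_k d^k‖ → 0` for ABPG-VMAW. -/
theorem stmt3
    {E : Type*} [NormedAddCommGroup E] [InnerProductSpace ℝ E] [FiniteDimensional ℝ E]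
    (C : Set E) (hCne : C.Nonempty) (hCopen : IsOpen C) (hCconv : Convex ℝ C)
    (φ f g : E → ℝ) (φ' f' : E → E) (Hφ : E → E →L[ℝ] E) (σ : ℝ) (hσ : 0 < σ)
    (hφconv : ConvexOn ℝ Set.univ φ) (hφlsc : LowerSemicontinuous φ)
    (hφ'grad : ∀ z ∈ C, HasGradientAt φ (φ' z) z)
    (hφ'' : ∀ z ∈ C, HasFDerivAt φ' (Hφ z) z)
    (hφ''cont : ContinuousOn Hφ C)
    (hφstrong : ∀ z ∈ C, ∀ u : E, σ * ‖u‖ ^ 2 ≤ ⟪Hφ z u, u⟫)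
    (hf'grad : ∀ z ∈ C, HasGradientAt f (f' z) z)
    (hf'cont : ContinuousOn f' C)
    (hgconv : ConvexOn ℝ Set.univ g) (hglsc : LowerSemicontinuous g)
    (Ψ : E → ℝ) (hΨ : ∀ z, Ψ z = f z + g z)
    (c₁ c₂ lam : ℝ) (hc₁ : 0 < c₁) (hc₁₂ : c₁ < c₂) (hc₂ : c₂ < 1) (hlam : 0 < lam)
    (x y d : ℕ → E) (t : ℕ → ℝ) (tbar : ℝ)
    (hxC : ∀ k, x k ∈ C) (hyC : ∀ k, y k ∈ C)
    (ht : ∀ k, 0 < t k) (htbar : ∀ k, t k ≤ tbar)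
    (hymin : ∀ k, IsMinOn (fun u => ⟪f' (x k), u - x k⟫ + g u +
      (1 / (2 * lam)) * ⟪Hφ (x k) (u - x k), u - x k⟫) (closure C) (y k))
    (hd : ∀ k, d k = y k - x k)
    (hstep : ∀ k, x k + t k • d k ∈ closure C)
    (hArmijo : ∀ k, Ψ (x k + t k • d k) < Ψ (x k) + c₁ * t k *
      (⟪f' (x k), d k⟫ + g (y k) - g (x k) +
        (1 / (2 * lam)) * ⟪Hφ (x k) (d k), d k⟫))
    (hWolfe : ∀ k, ∃ ξ ∈ subdiffWithin g Set.univ (x k),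
      c₂ * ⟪f' (x k) + ξ, d k⟫ < ⟪f' (x k + t k • d k) + ξ, d k⟫)
    (hupdate : ∀ k, x (k + 1) =
      if Ψ (y k) < Ψ (x k + t k • d k) then y k else x k + t k • d k)
    (hbdd : BddBelow (Ψ '' closure C)) :
    Summable (fun k => ‖t k • d k‖ ^ 2) ∧
    (∑' k, ‖t k • d k‖ ^ 2) ≤
      (2 * lam * tbar / (c₁ * σ)) * (Ψ (x 0) - sInf (Ψ '' closure C)) ∧
    Tendsto (fun k => ‖t k • d k‖) atTop (𝓝 0) :=
  stmt3_general C hCconv g f' Hφ σ hσ hφstrong hgconv Ψ c₁ lam hc₁ hlam x y d t tbar hxC hyC ht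
    htbar hymin hd hArmijo hupdate hbdd
end

section
/- Let x ∈ C, d ≠ 0, t > 0 with x + t d ∈ C, ξ ∈ ∂g(x), and constants 0 < c₂ < 1, M₁ > 0, λ > 0, σ > 0. Suppose: (a) ‖∇f(x + t d) − ∇f(x)‖ ≤ M₁ t ‖d‖ (local Lipschitz bound on ∇f along the step); (b) the Wolfe condition ⟨∇f(x + t d) + ξ, d⟩ > c₂⟨∇f(x) + ξ, d⟩ holds; and (c) ⟨−∇f(x) − ξ, d⟩ ≥ (σ/λ)‖d‖². Then t ≥ (1 − c₂)σ/(M₁ λ) > 0. -/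
open Set Filter Topology
open scoped RealInnerProductSpace

/-! With `p = ∇f(x) + ξ` and `q = ∇f(x + t d) + ξ`, the Wolfe condition together with the
descent property of `d` forces `⟪q - p, d⟫ > (1 - c₂) (σ / λ) ‖d‖²`, while the Lipschitz bound gives
`⟪q - p, d⟫ ≤ M₁ t ‖d‖²`; dividing by `‖d‖² > 0` bounds `t` from below. -/

section WolfeStep

variable {E : Type*} [NormedAddCommGroup E] [InnerProductSpace ℝ E]

lemma real_inner_le_mul_norm_sq_of_norm_le {v d : E} {K : ℝ} (h : ‖v‖ ≤ K * ‖d‖) :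
    ⟪v, d⟫ ≤ K * ‖d‖ ^ 2 :=
  calc ⟪v, d⟫ ≤ ‖v‖ * ‖d‖ := real_inner_le_norm v d
    _ ≤ K * ‖d‖ * ‖d‖ := mul_le_mul_of_nonneg_right h (norm_nonneg d)
    _ = K * ‖d‖ ^ 2 := by ring

lemma one_sub_mul_neg_inner_lt_inner_sub {p q d : E} {c : ℝ} (h : c * ⟪p, d⟫ < ⟪q, d⟫) :
    (1 - c) * -⟪p, d⟫ < ⟪q - p, d⟫ := by
  rw [inner_sub_left]
  linarith

lemma mul_norm_sq_lt_of_wolfe {p q d : E} {c K κ : ℝ} (hc : c < 1)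
    (hLip : ‖q - p‖ ≤ K * ‖d‖) (hWolfe : c * ⟪p, d⟫ < ⟪q, d⟫)
    (hdesc : κ * ‖d‖ ^ 2 ≤ -⟪p, d⟫) :
    (1 - c) * κ * ‖d‖ ^ 2 < K * ‖d‖ ^ 2 :=
  calc (1 - c) * κ * ‖d‖ ^ 2 = (1 - c) * (κ * ‖d‖ ^ 2) := by ring
    _ ≤ (1 - c) * -⟪p, d⟫ := mul_le_mul_of_nonneg_left hdesc (by linarith)
    _ < ⟪q - p, d⟫ := one_sub_mul_neg_inner_lt_inner_sub hWolfe
    _ ≤ K * ‖d‖ ^ 2 := real_inner_le_mul_norm_sq_of_norm_le hLip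

end WolfeStep

lemma div_mul_le_of_mul_div_lt {a σ M lam t : ℝ} (hM : 0 < M) (hlam : 0 < lam)
    (h : a * (σ / lam) < M * t) : a * σ / (M * lam) ≤ t := by
  rw [div_le_iff₀ (mul_pos hM hlam)]
  calc a * σ = a * (σ / lam) * lam := by field_simp
    _ ≤ M * t * lam := mul_le_mul_of_nonneg_right h.le hlam.le
    _ = t * (M * lam) := by ring

theorem stmt5_general
    {E : Type*} [NormedAddCommGroup E] [InnerProductSpace ℝ E]
    (f' : E → E)
    (x d : E) (hdne : d ≠ 0)
    (t : ℝ)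
    (ξ : E)
    (c₂ M₁ lam σ : ℝ) (hc₂' : c₂ < 1)
    (hM₁ : 0 < M₁) (hlam : 0 < lam) (hσ : 0 < σ)
    (hLip : ‖f' (x + t • d) - f' x‖ ≤ M₁ * t * ‖d‖)
    (hWolfe : c₂ * ⟪f' x + ξ, d⟫ < ⟪f' (x + t • d) + ξ, d⟫)
    (hdir : (σ / lam) * ‖d‖ ^ 2 ≤ ⟪-f' x - ξ, d⟫) :
    (1 - c₂) * σ / (M₁ * lam) ≤ t ∧ 0 < (1 - c₂) * σ / (M₁ * lam) := by
  rw [← neg_add', inner_neg_left] at hdir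
  have hcurv := mul_norm_sq_lt_of_wolfe hc₂'
    (by rwa [add_sub_add_right_eq_sub]) hWolfe hdir
  have hd : 0 < ‖d‖ ^ 2 := by positivity
  have hc : 0 < 1 - c₂ := sub_pos.2 hc₂'
  refine ⟨div_mul_le_of_mul_div_lt hM₁ hlam ?_, by positivity⟩
  rwa [mul_lt_mul_iff_of_pos_right hd] at hcurv

/-- lower bound on the step-size from the Wolfe condition. -/
theorem stmt5
    {E : Type*} [NormedAddCommGroup E] [InnerProductSpace ℝ E] [FiniteDimensional ℝ E]
    (C : Set E) (hCne : C.Nonempty) (hCopen : IsOpen C) (hCconv : Convex ℝ C)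
    (f g : E → ℝ) (f' : E → E)
    (hf'grad : ∀ z ∈ C, HasGradientAt f (f' z) z)
    (hf'cont : ContinuousOn f' C)
    (hgconv : ConvexOn ℝ Set.univ g) (hglsc : LowerSemicontinuous g)
    (x d : E) (hx : x ∈ C) (hdne : d ≠ 0)
    (t : ℝ) (ht : 0 < t) (htC : x + t • d ∈ C)
    (ξ : E) (hξ : ξ ∈ subdiffWithin g Set.univ x)
    (c₂ M₁ lam σ : ℝ) (hc₂ : 0 < c₂) (hc₂' : c₂ < 1)
    (hM₁ : 0 < M₁) (hlam : 0 < lam) (hσ : 0 < σ)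
    (hLip : ‖f' (x + t • d) - f' x‖ ≤ M₁ * t * ‖d‖)
    (hWolfe : c₂ * ⟪f' x + ξ, d⟫ < ⟪f' (x + t • d) + ξ, d⟫)
    (hdir : (σ / lam) * ‖d‖ ^ 2 ≤ ⟪-f' x - ξ, d⟫) :
    (1 - c₂) * σ / (M₁ * lam) ≤ t ∧ 0 < (1 - c₂) * σ / (M₁ * lam) :=
  stmt5_general f' x d hdne t ξ c₂ M₁ lam σ hc₂' hM₁ hlam hσ hLip hWolfe hdir
end

section
/- Let x ∈ C, λ > 0, and let y ∈ C be the minimizer over cl C of u ↦ ⟨∇f(x), u − x⟩ + g(u) + (1/(2λ))⟨∇²φ(x)(u − x), u − x⟩. Then the vector w := ∇f(y) − ∇f(x) − (1/λ)∇²φ(x)(y − x) satisfies w ∈ ∇f(y) + ∂(g + δ_{cl C})(y). Moreover, if M₁, M₂ > 0 satisfy ‖∇f(y) − ∇f(x)‖ ≤ M₁‖y − x‖ and ‖∇²φ(x)(y − x)‖ ≤ M₂‖y − x‖, and if t̲ ∈ (0,1] and x⁺ ∈ {y, x + t(y − x)} for some t ∈ [t̲, 1], then ‖w‖ ≤ ((M₁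 + M₂/λ)/t̲)‖x⁺ − x‖. -/
open Set Filter Topology
open scoped RealInnerProductSpace

/-- The map sending `u` to `⟪u, ·⟫` as a continuous linear map, over `ℝ`. -/
noncomputable def toDualL (E : Type*) [NormedAddCommGroup E] [InnerProductSpace ℝ E]
    [CompleteSpace E] : E →L[ℝ] (E →L[ℝ] ℝ) :=
  LinearMap.mkContinuous
    { toFun := fun u => (InnerProductSpace.toDual ℝ E u : E →L[ℝ] ℝ)
      map_add' := by intro u v; ext w; simp [inner_add_left]
      map_smul' := by intro c u; ext w; simp [real_inner_smul_left] }
    1 (by intro u; simp)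

@[simp] lemma toDualL_apply {E : Type*} [NormedAddCommGroup E] [InnerProductSpace ℝ E]
    [CompleteSpace E] (u v : E) : toDualL E u v = ⟪u, v⟫ := rfl

/-- Symmetry of the Hessian of a function with gradient `φ'` on an open set. -/
lemma hess_symm {E : Type*} [NormedAddCommGroup E] [InnerProductSpace ℝ E]
    [FiniteDimensional ℝ E]
    (C : Set E) (hCopen : IsOpen C)
    (φ : E → ℝ) (φ' : E → E) (Hφ : E → E →L[ℝ] E)
    (hφ'grad : ∀ z ∈ C, HasGradientAt φ (φ' z) z)
    (hφ'' : ∀ z ∈ C, HasFDerivAt φ' (Hφ z) z)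
    (x : E) (hx : x ∈ C) (u v : E) : ⟪Hφ x u, v⟫ = ⟪Hφ x v, u⟫ := by
  have hA : HasFDerivAt (fun z => toDualL E (φ' z)) ((toDualL E).comp (Hφ x)) x :=
    ((toDualL E).hasFDerivAt).comp x (hφ'' x hx)
  have hf : ∀ᶠ z in 𝓝 x, HasFDerivAt φ (toDualL E (φ' z)) z := by
    filter_upwards [hCopen.mem_nhds hx] with z hz
    exact (hasGradientAt_iff_hasFDerivAt.mp (hφ'grad z hz))
  have := second_derivative_symmetric_of_eventually hf hA u v
  simpa using this

/-- the vector `w = ∇f(y) − ∇f(x) − (1/λ)∇²φ(x)(y − x)` belongs to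
`∇f(y) + ∂(g + δ_{cl C})(y)` and satisfies the relative-error bound. -/
theorem stmt7
    {E : Type*} [NormedAddCommGroup E] [InnerProductSpace ℝ E] [FiniteDimensional ℝ E]
    (C : Set E) (hCne : C.Nonempty) (hCopen : IsOpen C) (hCconv : Convex ℝ C)
    (φ f g : E → ℝ) (φ' f' : E → E) (Hφ : E → E →L[ℝ] E) (σ : ℝ) (hσ : 0 < σ)
    (hφconv : ConvexOn ℝ Set.univ φ) (hφlsc : LowerSemicontinuous φ)
    (hφ'grad : ∀ z ∈ C, HasGradientAt φ (φ' z) z)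
    (hφ'' : ∀ z ∈ C, HasFDerivAt φ' (Hφ z) z)
    (hφ''cont : ContinuousOn Hφ C)
    (hφstrong : ∀ z ∈ C, ∀ u : E, σ * ‖u‖ ^ 2 ≤ ⟪Hφ z u, u⟫)
    (hf'grad : ∀ z ∈ C, HasGradientAt f (f' z) z)
    (hf'cont : ContinuousOn f' C)
    (hgconv : ConvexOn ℝ Set.univ g) (hglsc : LowerSemicontinuous g)
    (x : E) (hx : x ∈ C) (lam : ℝ) (hlam : 0 < lam)
    (y : E) (hy : y ∈ C)
    (hymin : IsMinOn (fun u => ⟪f' x, u - x⟫ + g u +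
      (1 / (2 * lam)) * ⟪Hφ x (u - x), u - x⟫) (closure C) y)
    (M₁ M₂ : ℝ) (hM₁ : 0 < M₁) (hM₂ : 0 < M₂)
    (hM₁b : ‖f' y - f' x‖ ≤ M₁ * ‖y - x‖)
    (hM₂b : ‖Hφ x (y - x)‖ ≤ M₂ * ‖y - x‖)
    (tlow : ℝ) (htlow : 0 < tlow) (htlow1 : tlow ≤ 1)
    (t : ℝ) (ht : t ∈ Icc tlow 1)
    (xp : E) (hxp : xp = y ∨ xp = x + t • (y - x)) :
    (f' y - f' x - (1 / lam) • Hφ x (y - x)) - f' y ∈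
      subdiffWithin g (closure C) y ∧
    ‖f' y - f' x - (1 / lam) • Hφ x (y - x)‖ ≤
      ((M₁ + M₂ / lam) / tlow) * ‖xp - x‖ := by
  have hsymm := hess_symm C hCopen φ φ' Hφ hφ'grad hφ'' x hx
  have hlam' : lam ≠ 0 := ne_of_gt hlam
  constructor
  · -- subdifferential membership
    intro z hz
    set v : E := y - x with hv
    set d : E := z - y with hd
    -- the key inequality for each s ∈ (0,1]
    have key : ∀ s : ℝ, s ∈ Ioc (0:ℝ) 1 →
        0 ≤ ⟪f' x, d⟫ + (g z - g y) + (1 / lam) * ⟪Hφ x v, d⟫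
          + s * ((1 / (2 * lam)) * ⟪Hφ x d, d⟫) := by
      intro s hs
      obtain ⟨hs0, hs1⟩ := hs
      set u : E := y + s • d with hu
      have hurw : u = (1 - s) • y + s • z := by
        simp only [hu, hd, smul_sub, sub_smul, one_smul]; abel
      have humem : u ∈ closure C := by
        rw [hurw]
        exact (hCconv.closure) (subset_closure hy) hz (by linarith) hs0.le (by ring)
      have hmin := isMinOn_iff.mp hymin u humem
      have hgu : g u ≤ (1 - s) * g y + s * g z := by
        rw [hurw]
        exact hgconv.2 (mem_univ y) (mem_univ z) (by linarith) hs0.le (by ring)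
      have hux : u - x = v + s • d := by simp [hu, hv]; abel
      have hexp : ⟪Hφ x (v + s • d), v + s • d⟫ =
          ⟪Hφ x v, v⟫ + 2 * s * ⟪Hφ x v, d⟫ + s ^ 2 * ⟪Hφ x d, d⟫ := by
        have h1 : ⟪Hφ x d, v⟫ = ⟪Hφ x v, d⟫ := hsymm d v
        simp only [map_add, map_smul, inner_add_left, inner_add_right,
          real_inner_smul_left, real_inner_smul_right, h1]
        ring
      have hlin : ⟪f' x, v + s • d⟫ = ⟪f' x, v⟫ + s * ⟪f' x, d⟫ := by
        simp [inner_add_right, real_inner_smul_right]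
      simp only [hux] at hmin
      rw [hexp, hlin] at hmin
      -- hmin : F y ≤ ...
      have hstep : 0 ≤ s * (⟪f' x, d⟫ + (g z - g y) + (1 / lam) * ⟪Hφ x v, d⟫
          + s * ((1 / (2 * lam)) * ⟪Hφ x d, d⟫)) := by
        have : (1 / (2 * lam)) * (2 * s * ⟪Hφ x v, d⟫) = s * ((1/lam) * ⟪Hφ x v, d⟫) := by
          field_simp
        nlinarith [hmin, hgu]
      nlinarith [hstep, hs0]
    -- take the limit s → 0⁺
    set A0 : ℝ := ⟪f' x, d⟫ + (g z - g y) + (1 / lam) * ⟪Hφ x v, d⟫ with hA0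
    have hlim : Tendsto (fun s : ℝ => A0 + s * ((1 / (2 * lam)) * ⟪Hφ x d, d⟫))
        (𝓝[>] (0:ℝ)) (𝓝 A0) := by
      have : Tendsto (fun s : ℝ => A0 + s * ((1 / (2 * lam)) * ⟪Hφ x d, d⟫))
          (𝓝 (0:ℝ)) (𝓝 (A0 + 0 * ((1 / (2 * lam)) * ⟪Hφ x d, d⟫))) := by
        exact tendsto_const_nhds.add ((continuous_id.mul continuous_const).tendsto 0)
      simpa using this.mono_left nhdsWithin_le_nhds
    have hA0nn : 0 ≤ A0 := by
      refine ge_of_tendsto hlim ?_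
      filter_upwards [Ioc_mem_nhdsGT one_pos] with s hs
      exact key s hs
    -- conclude
    have hinner : ⟪f' y - f' x - (1 / lam) • Hφ x (y - x) - f' y, z - y⟫ =
        -⟪f' x, d⟫ - (1 / lam) * ⟪Hφ x v, d⟫ := by
      have : f' y - f' x - (1 / lam) • Hφ x (y - x) - f' y
          = -(f' x) - (1 / lam) • Hφ x v := by rw [hv]; abel
      rw [this]
      simp [inner_sub_left, inner_neg_left, real_inner_smul_left, hd]
    rw [hinner]
    simp only [hA0] at hA0nn
    linarith
  · -- the norm bound
    have hnn : (0:ℝ) ≤ M₁ + M₂ / lam := by positivity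
    have hb : ‖f' y - f' x - (1 / lam) • Hφ x (y - x)‖ ≤ (M₁ + M₂ / lam) * ‖y - x‖ := by
      calc ‖f' y - f' x - (1 / lam) • Hφ x (y - x)‖
          ≤ ‖f' y - f' x‖ + ‖(1 / lam) • Hφ x (y - x)‖ := norm_sub_le _ _
        _ = ‖f' y - f' x‖ + (1 / lam) * ‖Hφ x (y - x)‖ := by
            rw [norm_smul]; congr 1; congr 1
            rw [Real.norm_eq_abs, abs_of_pos (by positivity)]
        _ ≤ M₁ * ‖y - x‖ + (1 / lam) * (M₂ * ‖y - x‖) := by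
            gcongr
        _ = (M₁ + M₂ / lam) * ‖y - x‖ := by field_simp
    rcases hxp with h | h
    · rw [h]
      have h1 : (M₁ + M₂ / lam) * ‖y - x‖ ≤ ((M₁ + M₂ / lam) / tlow) * ‖y - x‖ := by
        have : (M₁ + M₂ / lam) ≤ (M₁ + M₂ / lam) / tlow := by
          rw [le_div_iff₀ htlow]; nlinarith
        exact mul_le_mul_of_nonneg_right this (norm_nonneg _)
      linarith
    · rw [h]
      have hxx : x + t • (y - x) - x = t • (y - x) := by abel
      rw [hxx, norm_smul, Real.norm_eq_abs, abs_of_pos (lt_of_lt_of_le htlow ht.1)]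
      have htt : 1 ≤ t / tlow := (one_le_div htlow).2 ht.1
      have : ((M₁ + M₂ / lam) / tlow) * (t * ‖y - x‖)
          = (M₁ + M₂ / lam) * (t / tlow) * ‖y - x‖ := by ring
      rw [this]
      nlinarith [norm_nonneg (y - x), hb, mul_le_mul_of_nonneg_right
        (mul_le_mul_of_nonneg_left htt hnn) (norm_nonneg (y - x))]
end

section
/- Let {x^k}, {y^k} ⊂ C be sequences, x̄ ∈ C, and constants ρ₁, ρ₂, v, ρ > 0 and a function ψ: [0, v) → ℝ₊ that is continuous, concave, C¹ on (0, v), with ψ(0) = 0 and ψ' > 0 on (0, v). Fix indices k₀, k and suppose: (a) sufficient decrease: Ψ(x^{k₀+k}) − Ψ(x^{k₀+k+1}) ≥ ρ₁‖x^{k₀+k+1} − x^{k₀+k}‖²; (b) relative error: there exists w^{k₀+k−1} ∈ ∇f(y^{k₀+k−1}) + ∂(g + δ_{cl C})(y^{k₀+k−1}) with ‖w^{k₀+k−1}‖ ≤ ρ₂‖x^{k₀+k} − x^{k₀+k−1}‖; (c) ordering: Ψ(x̄) ≤ Ψ(x^{k₀+k+1}) < Ψ(x^{k₀+k}) ≤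 Ψ(y^{k₀+k−1}) < Ψ(x̄) + v; and (d) KL inequality: ψ'(Ψ(y^{k₀+k−1}) − Ψ(x̄)) · dist(0, ∇f(y^{k₀+k−1}) + ∂(g + δ_{cl C})(y^{k₀+k−1})) ≥ 1. Then 2‖x^{k₀+k+1} − x^{k₀+k}‖ ≤ ‖x^{k₀+k} − x^{k₀+k−1}‖ + χ_{k₀+k}, where χ_j := (ρ₂/ρ₁)[ψ(Ψ(x^j) − Ψ(x̄)) − ψ(Ψ(x^{j+1}) − Ψ(x̄))]. -/
open Set Filter Topology
open scoped RealInnerProductSpace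

set_option maxHeartbeats 1000000 in
/-- one-step KL estimate
`2‖x^{k₀+k+1} − x^{k₀+k}‖ ≤ ‖x^{k₀+k} − x^{k₀+k−1}‖ + χ_{k₀+k}`. -/
theorem stmt9
    {E : Type*} [NormedAddCommGroup E] [InnerProductSpace ℝ E] [FiniteDimensional ℝ E]
    (C : Set E) (hCne : C.Nonempty) (hCopen : IsOpen C) (hCconv : Convex ℝ C)
    (f g : E → ℝ) (f' : E → E)
    (hf'grad : ∀ z ∈ C, HasGradientAt f (f' z) z)
    (hf'cont : ContinuousOn f' C)
    (hgconv : ConvexOn ℝ Set.univ g) (hglsc : LowerSemicontinuous g)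
    (Ψ : E → ℝ) (hΨ : ∀ z, Ψ z = f z + g z)
    (x y : ℕ → E) (hxC : ∀ k, x k ∈ C) (hyC : ∀ k, y k ∈ C)
    (xbar : E) (hxbar : xbar ∈ C)
    (ρ₁ ρ₂ v ρ : ℝ) (hρ₁ : 0 < ρ₁) (hρ₂ : 0 < ρ₂) (hv : 0 < v) (hρ : 0 < ρ)
    (ψ ψd : ℝ → ℝ)
    (hψcont : ContinuousOn ψ (Ico 0 v)) (hψconc : ConcaveOn ℝ (Ico 0 v) ψ)
    (hψ0 : ψ 0 = 0) (hψnonneg : ∀ s ∈ Ico (0 : ℝ) v, 0 ≤ ψ s)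
    (hψder : ∀ s ∈ Ioo (0 : ℝ) v, HasDerivAt ψ (ψd s) s)
    (hψdpos : ∀ s ∈ Ioo (0 : ℝ) v, 0 < ψd s)
    (k₀ k : ℕ) (hk : 1 ≤ k₀ + k)
    (hdec : ρ₁ * ‖x (k₀ + k + 1) - x (k₀ + k)‖ ^ 2 ≤
      Ψ (x (k₀ + k)) - Ψ (x (k₀ + k + 1)))
    (herr : ∃ w : E, (w - f' (y (k₀ + k - 1))) ∈
        subdiffWithin g (closure C) (y (k₀ + k - 1)) ∧
      ‖w‖ ≤ ρ₂ * ‖x (k₀ + k) - x (k₀ + k - 1)‖)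
    (hord₁ : Ψ xbar ≤ Ψ (x (k₀ + k + 1)))
    (hord₂ : Ψ (x (k₀ + k + 1)) < Ψ (x (k₀ + k)))
    (hord₃ : Ψ (x (k₀ + k)) ≤ Ψ (y (k₀ + k - 1)))
    (hord₄ : Ψ (y (k₀ + k - 1)) < Ψ xbar + v)
    (hKL : 1 ≤ ψd (Ψ (y (k₀ + k - 1)) - Ψ xbar) *
      Metric.infDist 0 ((fun ξ => f' (y (k₀ + k - 1)) + ξ) ''
        subdiffWithin g (closure C) (y (k₀ + k - 1)))) :
    2 * ‖x (k₀ + k + 1) - x (k₀ + k)‖ ≤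
      ‖x (k₀ + k) - x (k₀ + k - 1)‖ +
      (ρ₂ / ρ₁) * (ψ (Ψ (x (k₀ + k)) - Ψ xbar) - ψ (Ψ (x (k₀ + k + 1)) - Ψ xbar)) := by

  obtain ⟨w, hw1, hw2⟩ := herr
  set A := Ψ (x (k₀ + k)) - Ψ xbar with hA
  set B := Ψ (x (k₀ + k + 1)) - Ψ xbar with hB
  set s := Ψ (y (k₀ + k - 1)) - Ψ xbar with hs
  set a := ‖x (k₀ + k) - x (k₀ + k - 1)‖ with ha
  set Δ := ‖x (k₀ + k + 1) - x (k₀ + k)‖ with hΔ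
  have haN : 0 ≤ a := ha ▸ norm_nonneg _
  have hΔN : 0 ≤ Δ := hΔ ▸ norm_nonneg _
  have hB0 : 0 ≤ B := by rw [hB]; linarith
  have hBA : B < A := by rw [hA, hB]; linarith
  have hAs : A ≤ s := by rw [hA, hs]; linarith
  have hsv : s < v := by rw [hs]; linarith
  have hA0 : 0 < A := lt_of_le_of_lt hB0 hBA
  have hsmem : s ∈ Ioo (0:ℝ) v := ⟨lt_of_lt_of_le hA0 hAs, hsv⟩
  have hAmem : A ∈ Ioo (0:ℝ) v := ⟨hA0, lt_of_le_of_lt hAs hsv⟩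
  have hψds := hψdpos s hsmem
  have hψdA := hψdpos A hAmem
  -- infDist bound
  have hmem : w ∈ (fun ξ => f' (y (k₀ + k - 1)) + ξ) ''
      subdiffWithin g (closure C) (y (k₀ + k - 1)) :=
    ⟨w - f' (y (k₀ + k - 1)), hw1, by simp⟩
  have hdist : Metric.infDist 0 ((fun ξ => f' (y (k₀ + k - 1)) + ξ) ''
      subdiffWithin g (closure C) (y (k₀ + k - 1))) ≤ ρ₂ * a := by
    have h : Metric.infDist (0 : E) ((fun ξ => f' (y (k₀ + k - 1)) + ξ) ''
        subdiffWithin g (closure C) (y (k₀ + k - 1))) ≤ dist (0 : E) w :=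
      Metric.infDist_le_dist_of_mem hmem
    rw [dist_zero_left] at h
    exact h.trans hw2
  have h1 : 1 ≤ ψd s * (ρ₂ * a) :=
    hKL.trans (mul_le_mul_of_nonneg_left hdist (le_of_lt hψds))
  have ha0 : 0 < a := by nlinarith [mul_pos hψds hρ₂]
  -- monotonicity of the derivative via slopes
  have hψdAs : ψd s ≤ ψd A := by
    rcases eq_or_lt_of_le hAs with h | h
    · rw [h]
    · have hAI : A ∈ Ico (0:ℝ) v := ⟨le_of_lt hA0, hAmem.2⟩
      have hsI : s ∈ Ico (0:ℝ) v := ⟨le_of_lt hsmem.1, hsv⟩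
      have t1 := hψconc.le_slope_of_hasDerivAt hAI hsI h (hψder s hsmem)
      have t2 := hψconc.slope_le_of_hasDerivAt hAI hsI h (hψder A hAmem)
      linarith
  have h2 : 1 ≤ ψd A * (ρ₂ * a) :=
    h1.trans (mul_le_mul_of_nonneg_right hψdAs (by positivity))
  -- tangent/secant inequality
  have hslope : ψd A ≤ slope ψ B A :=
    hψconc.le_slope_of_hasDerivAt ⟨hB0, lt_trans hBA hAmem.2⟩
      ⟨le_of_lt hA0, hAmem.2⟩ hBA (hψder A hAmem)
  rw [slope_def_field] at hslope
  have c2 : ψd A * (A - B) ≤ ψ A - ψ B :=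
    (le_div_iff₀ (by linarith)).mp hslope
  have c1 : ρ₁ * Δ ^ 2 ≤ A - B := by rw [hA, hB]; linarith
  -- combine
  have c3 : ρ₁ * Δ ^ 2 * (ψd A) ≤ ψ A - ψ B := by
    nlinarith [mul_le_mul_of_nonneg_right c1 (le_of_lt hψdA)]
  have c4 : Δ ^ 2 ≤ a * ((ρ₂ / ρ₁) * (ψ A - ψ B)) := by
    have h3 : Δ ^ 2 ≤ ρ₂ * a * (Δ ^ 2 * ψd A) := by
      nlinarith [mul_le_mul_of_nonneg_right h2 (sq_nonneg Δ)]
    have h4 : ρ₁ * (Δ ^ 2 * ψd A) ≤ ψ A - ψ B := by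
      nlinarith [mul_le_mul_of_nonneg_right c1 (le_of_lt hψdA), c2]
    calc Δ ^ 2 ≤ ρ₂ * a * (Δ ^ 2 * ψd A) := h3
    _ ≤ a * ((ρ₂ / ρ₁) * (ψ A - ψ B)) := by
        rw [div_mul_eq_mul_div, mul_div_assoc]
        rw [← sub_nonneg] at h4 ⊢
        have : a * (ρ₂ * ((ψ A - ψ B) / ρ₁)) - ρ₂ * a * (Δ ^ 2 * ψd A)
            = (a * ρ₂ / ρ₁) * ((ψ A - ψ B) - ρ₁ * (Δ ^ 2 * ψd A)) := by
          field_simp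
        rw [this]
        positivity
  nlinarith [sq_nonneg (Δ - a), c4, ha0]
end

section
/- Let A ∈ ℝ^{m×n}, b ∈ ℝ^m, p ≥ 1, θ_p > 0, and define f(x) = (1/2)‖Ax − b‖² + (θ_p/p)∑_{i=1}^n |x_i|^p and φ(x) = (1/2)‖x‖² + (1/p)∑_{i=1}^n |x_i|^p on ℝⁿ. Then for any L ≥ λ_max(AᵀA) + θ_p (where λ_max denotes the largest eigenvalue), both Lφ − f and Lφ + f are convex on ℝⁿ. -/
/-!
Up to an affine term, `L φ ∓ f` is `(L ∓ θ_p)/p · ∑ |x_i|^p + ½ xᵀ (L I ∓ AᵀA) x`.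
The first summand is convex because `t ↦ |t|^p` is convex for `p ≥ 1` and
`L - θ_p ≥ λ_max(AᵀA) ≥ 0`; the second because `L I ∓ AᵀA` is positive semidefinite, which for
the minus sign is the Loewner bound `AᵀA ≤ λ_max(AᵀA) I`, read off the spectrum through the
continuous functional calculus.
-/

open Set Matrix

theorem convexOn_univ_abs_rpow {p : ℝ} (hp : 1 ≤ p) : ConvexOn ℝ univ fun t : ℝ => |t| ^ p := by
  refine ⟨convex_univ, fun x _ y _ a c ha hc hac => ?_⟩
  calc |a • x + c • y| ^ p ≤ (a • |x| + c • |y|) ^ p := by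
        gcongr
        simpa [abs_mul, abs_of_nonneg ha, abs_of_nonneg hc] using abs_add_le (a * x) (c * y)
    _ ≤ a • |x| ^ p + c • |y| ^ p := (convexOn_rpow hp).2 (abs_nonneg x) (abs_nonneg y) ha hc hac

theorem ConvexOn.sum_apply {ι : Type*} [Fintype ι] {g : ℝ → ℝ} (hg : ConvexOn ℝ univ g) :
    ConvexOn ℝ univ fun x : ι → ℝ => ∑ i, g (x i) := by
  refine ⟨convex_univ, fun x _ y _ a c ha hc hac => ?_⟩
  simp only [Pi.add_apply, Pi.smul_apply, smul_eq_mul, Finset.mul_sum, ← Finset.sum_add_distrib]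
  exact Finset.sum_le_sum fun i _ => hg.2 trivial trivial ha hc hac

namespace Matrix

variable {m n : Type*} [Fintype m] [Fintype n]

theorem sum_sq_eq_dotProduct (x : n → ℝ) : ∑ i, x i ^ 2 = x ⬝ᵥ x := by
  simp only [dotProduct, sq]

theorem mulVec_dotProduct_mulVec (A : Matrix m n ℝ) (x : n → ℝ) :
    (A *ᵥ x) ⬝ᵥ (A *ᵥ x) = x ⬝ᵥ ((Aᵀ * A) *ᵥ x) := by
  rw [← mulVec_mulVec, dotProduct_mulVec x, vecMul_transpose]

theorem sum_sq_add_sum_sq_mulVec_sub [DecidableEq n] (A : Matrix m n ℝ) (b : m → ℝ) (L s : ℝ)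
    (x : n → ℝ) :
    L * ∑ i, x i ^ 2 + s * ∑ i, ((A *ᵥ x) i - b i) ^ 2
      = x ⬝ᵥ ((L • 1 + s • (Aᵀ * A)) *ᵥ x) + (-(2 * s) • (Aᵀ *ᵥ b)) ⬝ᵥ x + s * (b ⬝ᵥ b) := by
  have hresidual : ∑ i, ((A *ᵥ x) i - b i) ^ 2
      = x ⬝ᵥ ((Aᵀ * A) *ᵥ x) - 2 * ((Aᵀ *ᵥ b) ⬝ᵥ x) + b ⬝ᵥ b := by
    rw [← mulVec_dotProduct_mulVec, mulVec_transpose, ← dotProduct_mulVec]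
    simp only [dotProduct, Finset.mul_sum, ← Finset.sum_sub_distrib, ← Finset.sum_add_distrib]
    exact Finset.sum_congr rfl fun i _ => by ring
  rw [hresidual, sum_sq_eq_dotProduct]
  simp only [add_mulVec, smul_mulVec, one_mulVec, dotProduct_add, dotProduct_smul,
    smul_dotProduct, smul_eq_mul]
  ring

theorem PosSemidef.convexOn_dotProduct_mulVec_add {M : Matrix n n ℝ} (hM : M.PosSemidef)
    (v : n → ℝ) : ConvexOn ℝ univ fun x => x ⬝ᵥ (M *ᵥ x) + v ⬝ᵥ x := by
  refine ⟨convex_univ, fun x _ y _ a c ha hc hac => ?_⟩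
  have hgap : a • (x ⬝ᵥ (M *ᵥ x) + v ⬝ᵥ x) + c • (y ⬝ᵥ (M *ᵥ y) + v ⬝ᵥ y)
      - ((a • x + c • y) ⬝ᵥ (M *ᵥ (a • x + c • y)) + v ⬝ᵥ (a • x + c • y))
      = a * c * ((x - y) ⬝ᵥ (M *ᵥ (x - y))) := by
    obtain rfl : c = 1 - a := by linarith
    simp only [mulVec_add, mulVec_sub, mulVec_smul, dotProduct_add, add_dotProduct,
      dotProduct_sub, sub_dotProduct, dotProduct_smul, smul_dotProduct, smul_eq_mul]
    ring
  have hxy : 0 ≤ (x - y) ⬝ᵥ (M *ᵥ (x - y)) := by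
    simpa only [star_trivial] using hM.dotProduct_mulVec_nonneg (x - y)
  nlinarith [mul_nonneg (mul_nonneg ha hc) hxy]

theorem PosSemidef.convexOn_sum_sq_add_sum_sq_mulVec_sub [DecidableEq n] {A : Matrix m n ℝ}
    {L s : ℝ} (h : (L • 1 + s • (Aᵀ * A)).PosSemidef) (b : m → ℝ) :
    ConvexOn ℝ univ fun x => L * ∑ i, x i ^ 2 + s * ∑ i, ((A *ᵥ x) i - b i) ^ 2 :=
  ((h.convexOn_dotProduct_mulVec_add _).add_const (s * (b ⬝ᵥ b))).congr fun x _ =>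
    (sum_sq_add_sum_sq_mulVec_sub A b L s x).symm

open scoped MatrixOrder in
theorem IsHermitian.posSemidef_smul_one_sub [DecidableEq n] {M : Matrix n n ℝ}
    (hM : M.IsHermitian) {c : ℝ} (hc : ∀ i, hM.eigenvalues i ≤ c) :
    (c • 1 - M).PosSemidef := by
  rw [← Algebra.algebraMap_eq_smul_one, ← le_iff]
  refine le_algebraMap_of_spectrum_le (fun x hx => ?_) hM.isSelfAdjoint
  rw [hM.spectrum_real_eq_range_eigenvalues] at hx
  obtain ⟨i, rfl⟩ := hx
  exact hc i

end Matrix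

/-- the L-smad property for the ℓ_p regularized least squares
problem: both `Lφ − f` and `Lφ + f` are convex whenever
`L ≥ λ_max(AᵀA) + θ_p`. -/
theorem stmt12 {m n : ℕ} (A : Matrix (Fin m) (Fin n) ℝ) (b : Fin m → ℝ)
    (p θp : ℝ) (hp : 1 ≤ p) (hθp : 0 < θp)
    (hAA : (Aᵀ * A).IsHermitian)
    (L : ℝ) (hL : (⨆ i, hAA.eigenvalues i) + θp ≤ L) :
    ConvexOn ℝ Set.univ (fun x : Fin n → ℝ =>
      L * ((1 / 2) * ∑ i, x i ^ 2 + (1 / p) * ∑ i, |x i| ^ p) -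
      ((1 / 2) * ∑ i, (A.mulVec x i - b i) ^ 2 + (θp / p) * ∑ i, |x i| ^ p)) ∧
    ConvexOn ℝ Set.univ (fun x : Fin n → ℝ =>
      L * ((1 / 2) * ∑ i, x i ^ 2 + (1 / p) * ∑ i, |x i| ^ p) +
      ((1 / 2) * ∑ i, (A.mulVec x i - b i) ^ 2 + (θp / p) * ∑ i, |x i| ^ p)) := by
  have hAA_psd : (Aᵀ * A).PosSemidef := by simpa using posSemidef_conjTranspose_mul_self A
  have heig_nonneg : 0 ≤ ⨆ i, hAA.eigenvalues i := Real.iSup_nonneg hAA_psd.eigenvalues_nonneg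
  have heig_le : ∀ i, hAA.eigenvalues i ≤ L := fun i =>
    (le_ciSup (finite_range _).bddAbove i).trans (by linarith)
  have hminus : (L • 1 + (-1 : ℝ) • (Aᵀ * A)).PosSemidef := by
    simpa [sub_eq_add_neg] using hAA.posSemidef_smul_one_sub heig_le
  have hplus : (L • 1 + (1 : ℝ) • (Aᵀ * A)).PosSemidef := by
    simpa using (PosSemidef.one.smul (by linarith : 0 ≤ L)).add hAA_psd
  have hlp := (convexOn_univ_abs_rpow hp).sum_apply (ι := Fin n)
  have hp₀ : 0 < p := by linarith
  have hcoef_minus : 0 ≤ (L - θp) / p := div_nonneg (by linarith) hp₀.le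
  have hcoef_plus : 0 ≤ (L + θp) / p := div_nonneg (by linarith) hp₀.le
  constructor
  · refine ((hminus.convexOn_sum_sq_add_sum_sq_mulVec_sub b).smul (by norm_num : (0 : ℝ) ≤ 1 / 2)
      |>.add (hlp.smul hcoef_minus)).congr fun x _ => ?_
    simp only [Pi.add_apply, smul_eq_mul]
    ring
  · refine ((hplus.convexOn_sum_sq_add_sum_sq_mulVec_sub b).smul (by norm_num : (0 : ℝ) ≤ 1 / 2)
      |>.add (hlp.smul hcoef_plus)).congr fun x _ => ?_
    simp only [Pi.add_apply, smul_eq_mul]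
    ring
end

section
/- Suppose g ≡ 0 and dom φ = ℝⁿ. Let x ∈ ℝⁿ, λ > 0, c₁ ∈ (0,1), let y be the minimizer over ℝⁿ of u ↦ ⟨∇f(x), u − x⟩ + (1/(2λ))⟨∇²φ(x)(u − x), u − x⟩, set d = y − x, and assume d ≠ 0 and f is bounded below on ℝⁿ. Define A(t) = f(x + t d) − f(x) − c₁ t (⟨∇f(x), d⟩ + (1/(2λ))⟨∇²φ(x)d, d⟩). Then there exist positive numbers t_α < t_β such that A(t) < 0 for all t ∈ (0, t_α) and A(t) ≥ 0 for all t > t_β. -/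
/-!
Write `q(v) = ⟪∇f(x), v⟫ + c ⟪∇²φ(x) v, v⟫` with `c = 1/(2λ)`, so that `d` minimizes `q` and the
bracket in `A(t)` is `Δ = q(d)`. Comparing `q(d)` with `q(d/2)` and using strong convexity gives
`Δ ≤ -(c/2) ⟪∇²φ(x) d, d⟫ < 0`, hence the slope `⟪∇f(x), d⟫ = Δ - c ⟪∇²φ(x) d, d⟫` of
`t ↦ f(x + t d)` at `0` lies strictly below `c₁ Δ`, which makes `A` negative for small `t > 0`.
For large `t`, the term `-c₁ t Δ` grows linearly while `f` is bounded below.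
-/

open Set Filter Topology
open scoped RealInnerProductSpace

section

variable {E : Type*} [NormedAddCommGroup E] [InnerProductSpace ℝ E]

lemma inner_add_mul_inner_neg_of_isMinOn {g : E} {Q : E →L[ℝ] E} {c : ℝ} {x y : E}
    (hc : 0 < c) (hQ : 0 < ⟪Q (y - x), y - x⟫)
    (hmin : IsMinOn (fun u => ⟪g, u - x⟫ + c * ⟪Q (u - x), u - x⟫) univ y) :
    ⟪g, y - x⟫ + c * ⟪Q (y - x), y - x⟫ < 0 := by
  have hhalf := hmin (mem_univ (x + (1 / 2 : ℝ) • (y - x)))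
  simp only [mem_ofPred_eq, add_sub_cancel_left, map_smul, real_inner_smul_left,
    real_inner_smul_right] at hhalf
  nlinarith [mul_pos hc hQ]

lemma HasGradientAt.hasDerivAt_add_smul [CompleteSpace E] {f : E → ℝ} {f' x : E}
    (hf : HasGradientAt f f' x) (d : E) :
    HasDerivAt (fun t : ℝ => f (x + t • d)) ⟪f', d⟫ 0 := by
  have hline : HasDerivAt (fun t : ℝ => x + t • d) d 0 := by
    simpa using ((hasDerivAt_id (0 : ℝ)).smul_const d).const_add x
  have hf₀ : HasFDerivAt f (InnerProductSpace.toDual ℝ E f') (x + (0 : ℝ) • d) := by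
    simpa using hf.hasFDerivAt
  simpa [Function.comp_def] using hf₀.comp_hasDerivAt (0 : ℝ) hline

end

lemma exists_pos_forall_Ioo_sub_sub_mul_neg {ψ : ℝ → ℝ} {a b : ℝ} (hψ : HasDerivAt ψ a 0)
    (hab : a < b) : ∃ ε > 0, ∀ t ∈ Ioo 0 ε, ψ t - ψ 0 - b * t < 0 := by
  have hslope : ∀ᶠ t in 𝓝[>] 0, slope ψ 0 t < b :=
    hψ.hasDerivWithinAt.limsup_slope_le' self_notMem_Ioi hab
  obtain ⟨ε, hε, hsub⟩ := mem_nhdsGT_iff_exists_Ioo_subset.mp hslope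
  refine ⟨ε, hε, fun t ht => ?_⟩
  have ht' : (ψ t - ψ 0) / t < b := by simpa [slope_def_field] using hsub ht
  rw [div_lt_iff₀ ht.1] at ht'
  linarith

lemma exists_forall_gt_sub_sub_mul_nonneg {h : ℝ → ℝ} (hh : BddBelow (range h)) (c : ℝ)
    {k : ℝ} (hk : k < 0) : ∃ T, ∀ t, T < t → 0 ≤ h t - c - k * t := by
  obtain ⟨m, hm⟩ := hh
  refine ⟨(c - m) / -k, fun t ht => ?_⟩
  rw [div_lt_iff₀ (neg_pos.mpr hk)] at ht
  linarith [hm (mem_range_self t)]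

theorem stmt13_general
    {E : Type*} [NormedAddCommGroup E] [InnerProductSpace ℝ E] [FiniteDimensional ℝ E]
    (f : E → ℝ) (f' : E → E) (Hφ : E → E →L[ℝ] E) (σ : ℝ) (hσ : 0 < σ)
    (hφstrong : ∀ z u : E, σ * ‖u‖ ^ 2 ≤ ⟪Hφ z u, u⟫)
    (hf'grad : ∀ z, HasGradientAt f (f' z) z)
    (hfbdd : BddBelow (Set.range f))
    (x : E) (lam : ℝ) (hlam : 0 < lam) (c₁ : ℝ) (hc₁ : c₁ ∈ Ioo (0 : ℝ) 1)
    (y : E)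
    (hymin : IsMinOn (fun u => ⟪f' x, u - x⟫ +
      (1 / (2 * lam)) * ⟪Hφ x (u - x), u - x⟫) Set.univ y)
    (d : E) (hd : d = y - x) (hdne : d ≠ 0) :
    ∃ tα tβ : ℝ, 0 < tα ∧ tα < tβ ∧
      (∀ t ∈ Ioo (0 : ℝ) tα,
        f (x + t • d) - f x - c₁ * t *
          (⟪f' x, d⟫ + (1 / (2 * lam)) * ⟪Hφ x d, d⟫) < 0) ∧
      (∀ t : ℝ, tβ < t →
        0 ≤ f (x + t • d) - f x - c₁ * t *
          (⟪f' x, d⟫ + (1 / (2 * lam)) * ⟪Hφ x d, d⟫)) := by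
  subst hd
  set Δ := ⟪f' x, y - x⟫ + (1 / (2 * lam)) * ⟪Hφ x (y - x), y - x⟫
  have hc : 0 < 1 / (2 * lam) := by positivity
  have hQ : 0 < ⟪Hφ x (y - x), y - x⟫ :=
    (mul_pos hσ (pow_pos (norm_pos_iff.mpr hdne) 2)).trans_le (hφstrong x (y - x))
  have hΔ : Δ < 0 := inner_add_mul_inner_neg_of_isMinOn hc hQ hymin
  have hslope : ⟪f' x, y - x⟫ < c₁ * Δ := by nlinarith [mul_pos hc hQ, hc₁.2]
  obtain ⟨tα, htα, hsmall⟩ :=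
    exists_pos_forall_Ioo_sub_sub_mul_neg ((hf'grad x).hasDerivAt_add_smul (y - x)) hslope
  obtain ⟨T, hlarge⟩ :=
    exists_forall_gt_sub_sub_mul_nonneg (h := fun t : ℝ => f (x + t • (y - x)))
      (hfbdd.mono (range_comp_subset_range _ f)) (f x) (mul_neg_of_pos_of_neg hc₁.1 hΔ)
  refine ⟨tα, max (tα + 1) T, htα, lt_max_of_lt_left (lt_add_one tα),
    fun t ht => ?_, fun t ht => ?_⟩
  · simpa [mul_right_comm c₁] using hsmall t ht
  · simpa [mul_right_comm c₁] using hlarge t (lt_of_le_of_lt (le_max_right _ _) ht)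

/-- existence of thresholds `t_α < t_β` for the Armijo-type
function `A(t)` in the case `g ≡ 0` and `dom φ = ℝⁿ`. -/
theorem stmt13
    {E : Type*} [NormedAddCommGroup E] [InnerProductSpace ℝ E] [FiniteDimensional ℝ E]
    (φ f : E → ℝ) (φ' f' : E → E) (Hφ : E → E →L[ℝ] E) (σ : ℝ) (hσ : 0 < σ)
    (hφconv : ConvexOn ℝ Set.univ φ)
    (hφ'grad : ∀ z, HasGradientAt φ (φ' z) z)
    (hφ'' : ∀ z, HasFDerivAt φ' (Hφ z) z)
    (hφ''cont : Continuous Hφ)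
    (hφstrong : ∀ z u : E, σ * ‖u‖ ^ 2 ≤ ⟪Hφ z u, u⟫)
    (hf'grad : ∀ z, HasGradientAt f (f' z) z)
    (hf'cont : Continuous f')
    (hfbdd : BddBelow (Set.range f))
    (x : E) (lam : ℝ) (hlam : 0 < lam) (c₁ : ℝ) (hc₁ : c₁ ∈ Ioo (0 : ℝ) 1)
    (y : E)
    (hymin : IsMinOn (fun u => ⟪f' x, u - x⟫ +
      (1 / (2 * lam)) * ⟪Hφ x (u - x), u - x⟫) Set.univ y)
    (d : E) (hd : d = y - x) (hdne : d ≠ 0) :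
    ∃ tα tβ : ℝ, 0 < tα ∧ tα < tβ ∧
      (∀ t ∈ Ioo (0 : ℝ) tα,
        f (x + t • d) - f x - c₁ * t *
          (⟪f' x, d⟫ + (1 / (2 * lam)) * ⟪Hφ x d, d⟫) < 0) ∧
      (∀ t : ℝ, tβ < t →
        0 ≤ f (x + t • d) - f x - c₁ * t *
          (⟪f' x, d⟫ + (1 / (2 * lam)) * ⟪Hφ x d, d⟫)) :=
  stmt13_general f f' Hφ σ hσ hφstrong hf'grad hfbdd x lam hlam c₁ hc₁ y hymin d hd hdne
end

section
/- Suppose g ≡ 0 and dom φ = ℝⁿ. Let x ∈ ℝⁿ, λ > 0, 0 < c₁ < c₂ < 1, let y be the minimizer over ℝⁿ of u ↦ ⟨∇f(x), u − x⟩ + (1/(2λ))⟨∇²φ(x)(u − x), u − x⟩, set d = y − x with d ≠ 0, and define A(t) = f(x + t d) − f(x) − c₁ t (⟨∇f(x), d⟩ + (1/(2λ))⟨∇²φ(x)d, d⟩) and W(t) = ⟨∇f(x + t d), d⟩ − c₂⟨∇f(x), d⟩. If 0 < t_α < t_β satisfy A(t_α) < 0 and A(t_β) ≥ 0, then there exists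 a nonempty interval [t̃_α, t̃_β] ⊆ [t_α, t_β] with t̃_α < t̃_β such that A(t) < 0 and W(t) > 0 for all t ∈ [t̃_α, t̃_β]. -/
open Set Filter Topology
open scoped RealInnerProductSpace

/-!
Restricted to the line `u = x + s • d`, the quadratic model becomes `s ↦ s a + s² b` with
`a = ⟪∇f(x), d⟫`, `b = ⟪∇²φ(x) d, d⟫ / (2λ)`, minimized at `s = 1`. Comparing with `s = 0` and
differentiating at `s = 1` gives `a + b ≤ 0` and `a + 2b = 0`, so `b ≥ 0` and `⟪∇f(x), d⟫ = 2(a + b)`.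
Let `t̂` be the first point of `[t_α, t_β]` where `A ≥ 0`. By the mean value theorem `A' > 0` at some
`ξ ∈ (t_α, t̂)`, where also `A < 0`; by continuity both persist on a short interval `[ξ, ξ + δ]`.
Finally `W - A' = c₁ (a + b) - 2 c₂ (a + b) = (2c₂ - c₁) b ≥ 0`.
-/

lemma add_two_mul_eq_zero_of_forall_le {a b : ℝ} (h : ∀ s : ℝ, a + b ≤ s * a + s ^ 2 * b) :
    a + 2 * b = 0 := by
  have hmin : IsLocalMin (fun s : ℝ => s * a + s ^ 2 * b) 1 :=
    Eventually.of_forall fun s => by simpa using h s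
  have hderiv : HasDerivAt (fun s : ℝ => s * a + s ^ 2 * b) (a + 2 * b) 1 := by
    simpa using (hasDerivAt_mul_const a).fun_add ((hasDerivAt_pow 2 (1 : ℝ)).mul_const b)
  exact hmin.hasDerivAt_eq_zero hderiv

section QuadraticModel

variable {E : Type*} [NormedAddCommGroup E] [InnerProductSpace ℝ E]
  {g : E} {H : E →L[ℝ] E} {c : ℝ} {x y : E}

lemma inner_add_mul_inner_nonpos_of_isMinOn
    (hy : IsMinOn (fun u => ⟪g, u - x⟫ + c * ⟪H (u - x), u - x⟫) univ y) :
    ⟪g, y - x⟫ + c * ⟪H (y - x), y - x⟫ ≤ 0 := by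
  simpa using hy (mem_univ x)

lemma inner_add_two_mul_inner_eq_zero_of_isMinOn
    (hy : IsMinOn (fun u => ⟪g, u - x⟫ + c * ⟪H (u - x), u - x⟫) univ y) :
    ⟪g, y - x⟫ + 2 * (c * ⟪H (y - x), y - x⟫) = 0 := by
  refine add_two_mul_eq_zero_of_forall_le fun s => ?_
  have hs := isMinOn_iff.1 hy (x + s • (y - x)) (mem_univ _)
  simp only [add_sub_cancel_left, map_smul, real_inner_smul_left, real_inner_smul_right] at hs
  linear_combination hs

lemma HasGradientAt.hasDerivAt_comp_add_smul [CompleteSpace E] {f : E → ℝ} {f' d : E} {t : ℝ}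
    (hf : HasGradientAt f f' (x + t • d)) :
    HasDerivAt (fun s : ℝ => f (x + s • d)) ⟪f', d⟫ t := by
  have hline : HasDerivAt (fun s : ℝ => x + s • d) d t := by
    simpa using ((hasDerivAt_id t).smul_const d).const_add x
  exact hf.hasFDerivAt.comp_hasDerivAt t hline

end QuadraticModel

lemma exists_mem_Ioc_nonneg_forall_Ico_neg {A : ℝ → ℝ} {a b : ℝ}
    (hA : ContinuousOn A (Icc a b)) (hab : a ≤ b) (ha : A a < 0) (hb : 0 ≤ A b) :
    ∃ c ∈ Ioc a b, 0 ≤ A c ∧ ∀ t ∈ Ico a c, A t < 0 := by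
  set S := Icc a b ∩ A ⁻¹' Ici 0
  have hS : IsClosed S := hA.preimage_isClosed_of_isClosed isClosed_Icc isClosed_Ici
  have hSne : S.Nonempty := ⟨b, ⟨hab, le_rfl⟩, hb⟩
  have hSbdd : BddBelow S := ⟨a, fun t ht => ht.1.1⟩
  obtain ⟨⟨hac, hcb⟩, hc⟩ := hS.csInf_mem hSne hSbdd
  have hac' : a < sInf S := hac.lt_of_ne fun h => (h ▸ hc : 0 ≤ A a).not_gt ha
  refine ⟨sInf S, ⟨hac', hcb⟩, hc, fun t ⟨hat, htc⟩ => ?_⟩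
  by_contra! hAt
  exact (csInf_le hSbdd ⟨⟨hat, htc.le.trans hcb⟩, hAt⟩).not_gt htc

lemma exists_Icc_forall_neg_and_deriv_pos {A A' : ℝ → ℝ} (hA : ∀ t, HasDerivAt A (A' t) t)
    (hA' : Continuous A') {a b : ℝ} (hab : a < b) (ha : A a < 0) (hb : 0 ≤ A b) :
    ∃ a' b', a ≤ a' ∧ a' < b' ∧ b' ≤ b ∧ ∀ t ∈ Icc a' b', A t < 0 ∧ 0 < A' t := by
  have hAcont : Continuous A := continuous_iff_continuousAt.2 fun t => (hA t).continuousAt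
  obtain ⟨c, ⟨hac, hcb⟩, hc, hneg⟩ :=
    exists_mem_Ioc_nonneg_forall_Ico_neg hAcont.continuousOn hab.le ha hb
  obtain ⟨ξ, hξ, hslope⟩ :=
    exists_hasDerivAt_eq_slope A A' hac hAcont.continuousOn fun t _ => hA t
  have hA'ξ : 0 < A' ξ := hslope ▸ div_pos (by linarith) (sub_pos.2 hac)
  have hev : ∀ᶠ t in 𝓝 ξ, t ∈ Ioo a c ∧ 0 < A' t :=
    Eventually.and (Ioo_mem_nhds hξ.1 hξ.2) (continuousAt_const.eventually_lt hA'.continuousAt hA'ξ)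
  obtain ⟨l, u, ⟨hlξ, hξu⟩, hsub⟩ := hev.exists_Ioo_subset
  have hmem : ∀ t ∈ Icc ξ ((ξ + u) / 2), t ∈ Ioo a c ∧ 0 < A' t :=
    fun t ht => hsub ⟨by linarith [ht.1], by linarith [ht.2]⟩
  refine ⟨ξ, (ξ + u) / 2, hξ.1.le, by linarith, ?_, fun t ht => ?_⟩
  · linarith [(hmem _ ⟨by linarith, le_rfl⟩).1.2]
  · obtain ⟨⟨hat, htc⟩, hA't⟩ := hmem t ht
    exact ⟨hneg t ⟨hat.le, htc⟩, hA't⟩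

theorem stmt14_general
    {E : Type*} [NormedAddCommGroup E] [InnerProductSpace ℝ E] [FiniteDimensional ℝ E]
    (f : E → ℝ) (f' : E → E) (Hφ : E → E →L[ℝ] E)
    (hf'grad : ∀ z, HasGradientAt f (f' z) z)
    (hf'cont : Continuous f')
    (x : E) (lam : ℝ)
    (c₁ c₂ : ℝ) (hc₁ : 0 < c₁) (hc₁₂ : c₁ < c₂)
    (y : E)
    (hymin : IsMinOn (fun u => ⟪f' x, u - x⟫ +
      (1 / (2 * lam)) * ⟪Hφ x (u - x), u - x⟫) Set.univ y)
    (d : E) (hd : d = y - x)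
    (A W : ℝ → ℝ)
    (hA : ∀ t, A t = f (x + t • d) - f x - c₁ * t *
      (⟪f' x, d⟫ + (1 / (2 * lam)) * ⟪Hφ x d, d⟫))
    (hW : ∀ t, W t = ⟪f' (x + t • d), d⟫ - c₂ * ⟪f' x, d⟫)
    (tα tβ : ℝ) (htαβ : tα < tβ)
    (hAα : A tα < 0) (hAβ : 0 ≤ A tβ) :
    ∃ ttα ttβ : ℝ, tα ≤ ttα ∧ ttα < ttβ ∧ ttβ ≤ tβ ∧
      ∀ t ∈ Icc ttα ttβ, A t < 0 ∧ 0 < W t := by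
  have hdecrease := inner_add_mul_inner_nonpos_of_isMinOn hymin
  have hstationary := inner_add_two_mul_inner_eq_zero_of_isMinOn hymin
  rw [← hd] at hdecrease hstationary
  set q := ⟪f' x, d⟫ + (1 / (2 * lam)) * ⟪Hφ x d, d⟫
  have hAderiv : ∀ t, HasDerivAt A (⟪f' (x + t • d), d⟫ - c₁ * q) t := fun t => by
    rw [funext hA]
    exact (((hf'grad _).hasDerivAt_comp_add_smul).sub_const (f x)).sub
      (by simpa using ((hasDerivAt_id t).const_mul c₁).mul_const q)
  obtain ⟨ttα, ttβ, hα, hαβ, hβ, hI⟩ :=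
    exists_Icc_forall_neg_and_deriv_pos hAderiv (by fun_prop) htαβ hAα hAβ
  refine ⟨ttα, ttβ, hα, hαβ, hβ, fun t ht => ⟨(hI t ht).1, ?_⟩⟩
  rw [hW]
  nlinarith [(hI t ht).2, mul_nonneg (show 0 ≤ (1 / (2 * lam)) * ⟪Hφ x d, d⟫ by linarith)
    (show 0 ≤ 2 * c₂ - c₁ by linarith)]

/-- between a point where `A < 0` and a point where `A ≥ 0`
there is a nonempty interval of Armijo--Wolfe steps (case `g ≡ 0`). -/
theorem stmt14
    {E : Type*} [NormedAddCommGroup E] [InnerProductSpace ℝ E] [FiniteDimensional ℝ E]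
    (φ f : E → ℝ) (φ' f' : E → E) (Hφ : E → E →L[ℝ] E) (σ : ℝ) (hσ : 0 < σ)
    (hφconv : ConvexOn ℝ Set.univ φ)
    (hφ'grad : ∀ z, HasGradientAt φ (φ' z) z)
    (hφ'' : ∀ z, HasFDerivAt φ' (Hφ z) z)
    (hφ''cont : Continuous Hφ)
    (hφstrong : ∀ z u : E, σ * ‖u‖ ^ 2 ≤ ⟪Hφ z u, u⟫)
    (hf'grad : ∀ z, HasGradientAt f (f' z) z)
    (hf'cont : Continuous f')
    (x : E) (lam : ℝ) (hlam : 0 < lam)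
    (c₁ c₂ : ℝ) (hc₁ : 0 < c₁) (hc₁₂ : c₁ < c₂) (hc₂ : c₂ < 1)
    (y : E)
    (hymin : IsMinOn (fun u => ⟪f' x, u - x⟫ +
      (1 / (2 * lam)) * ⟪Hφ x (u - x), u - x⟫) Set.univ y)
    (d : E) (hd : d = y - x) (hdne : d ≠ 0)
    (A W : ℝ → ℝ)
    (hA : ∀ t, A t = f (x + t • d) - f x - c₁ * t *
      (⟪f' x, d⟫ + (1 / (2 * lam)) * ⟪Hφ x d, d⟫))
    (hW : ∀ t, W t = ⟪f' (x + t • d), d⟫ - c₂ * ⟪f' x, d⟫)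
    (tα tβ : ℝ) (htα : 0 < tα) (htαβ : tα < tβ)
    (hAα : A tα < 0) (hAβ : 0 ≤ A tβ) :
    ∃ ttα ttβ : ℝ, tα ≤ ttα ∧ ttα < ttβ ∧ ttβ ≤ tβ ∧
      ∀ t ∈ Icc ttα ttβ, A t < 0 ∧ 0 < W t :=
  stmt14_general f f' Hφ hf'grad hf'cont x lam c₁ c₂ hc₁ hc₁₂ y hymin d hd A W hA hW tα tβ htαβ hAα
    hAβ
end
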